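/- Let H be a Hilbert space, let A ⊆ H × H be maximal monotone, and let B : H → H be Lipschitz continuous. If the relation A + B := {(x, y + Bx) : (x,y) ∈ A} is monotone, then A + B is maximal monotone. -/

import Mathlib

open MeasureTheory

noncomputable section

/-- The exponentially weighted Lebesgue measure `e^{-2ρt}·dt` on `ℝ`. -/
def wMeasure (ρ : ℝ) : Measure ℝ :=
  MeasureTheory.volume.withDensity fun t => ENNReal.ofReal (Real.exp (-2 * ρ * t))

/-- The weighted space `L_{2,ρ}(ℝ;H)`. -/
abbrev L2w (H : Type*) [NormedAddCommGroup H] (ρ : ℝ) : Type _ :=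
  Lp H 2 (wMeasure ρ)

/-- The set of classes of smooth compactly supported functions (`C_c^∞(ℝ;H)`)
inside `L_{2,ρ}(ℝ;H)`. -/
def testSet (H : Type*) [NormedAddCommGroup H] [InnerProductSpace ℂ H] (ρ : ℝ) :
    Set (L2w H ρ) :=
  {u | ∃ φ : ℝ → H, ContDiff ℝ (⊤ : ℕ∞) φ ∧ HasCompactSupport φ ∧
    ∀ᵐ t ∂(wMeasure ρ), u t = φ t}

/-- The graph of `∂_{t,ρ}`, i.e. the closure (in `L_{2,ρ} × L_{2,ρ}`) of the graph of the
derivative operator defined on smooth compactly supported functions. -/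
def derivGraph (H : Type*) [NormedAddCommGroup H] [InnerProductSpace ℂ H] (ρ : ℝ) :
    Set (L2w H ρ × L2w H ρ) :=
  closure {p | ∃ φ : ℝ → H, ContDiff ℝ (⊤ : ℕ∞) φ ∧ HasCompactSupport φ ∧
    (∀ᵐ t ∂(wMeasure ρ), p.1 t = φ t) ∧ (∀ᵐ t ∂(wMeasure ρ), p.2 t = deriv φ t)}

section Rel

variable {K : Type*} [NormedAddCommGroup K] [InnerProductSpace ℂ K]

/-- A relation `A ⊆ K × K` is monotone if `Re⟨u - x, v - y⟩ ≥ 0` for all `(u,v), (x,y) ∈ A`. -/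
def IsMonotoneRel (A : Set (K × K)) : Prop :=
  ∀ p ∈ A, ∀ q ∈ A, 0 ≤ (inner ℂ (p.1 - q.1) (p.2 - q.2) : ℂ).re

/-- A relation is maximal monotone if it is monotone and has no proper monotone extension. -/
def IsMaxMonotoneRel (A : Set (K × K)) : Prop :=
  IsMonotoneRel A ∧ ∀ B : Set (K × K), IsMonotoneRel B → A ⊆ B → A = B

/-- `A - c = {(u, v - c•u) ; (u,v) ∈ A}`. -/
def shiftRel (c : ℝ) (A : Set (K × K)) : Set (K × K) :=
  (fun p : K × K => (p.1, p.2 - (c : ℂ) • p.1)) '' A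

/-- `A` is `c`-monotone if `A - c` is monotone. -/
def IsCMonotoneRel (c : ℝ) (A : Set (K × K)) : Prop :=
  IsMonotoneRel (shiftRel c A)

/-- `A` is `c`-maximal monotone if `A - c` is maximal monotone. -/
def IsCMaxMonotoneRel (c : ℝ) (A : Set (K × K)) : Prop :=
  IsMaxMonotoneRel (shiftRel c A)

end Rel

/-- Translation invariance of a relation on `L_{2,ρ}(ℝ;H)`:
`(u,v) ∈ A` implies `(τ_h u, τ_h v) ∈ A` for `h ≥ 0`. -/
def TransInvRel (H : Type*) [NormedAddCommGroup H] [InnerProductSpace ℂ H] (ρ : ℝ)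
    (A : Set (L2w H ρ × L2w H ρ)) : Prop :=
  ∀ u v, (u, v) ∈ A → ∀ h : ℝ, 0 ≤ h → ∀ u' v' : L2w H ρ,
    (∀ᵐ t ∂(wMeasure ρ), u' t = u (t + h)) →
    (∀ᵐ t ∂(wMeasure ρ), v' t = v (t + h)) → (u', v') ∈ A

/-!
By Minty's theorem the resolvent `J = (1 + cA)⁻¹` of a maximal monotone `A` is defined on all of
`H` and nonexpansive. When `c · Lip B < 1`, the map `y ↦ J (z - c B y)` is a contraction; its
fixed point `y` gives `(y, v) ∈ A` with `y + c (v + B y) = z`. Hence `1 + c (A + B)` is onto, and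
a monotone relation with this range property is maximal, since a point monotonically related to
it is forced to coincide with the element of the relation having the same image under `1 + c·`.

Minty's theorem is proved variationally. For `a ∈ A` the functions
`p ↦ ‖p + (a.2, a.1)‖² / 2 - ‖a.1 + a.2‖² / 2` on the Hilbert sum `H ⊕ H` are `1`-strongly convex,
so their supremum has a minimiser `(x, y)` (a minimising sequence is Cauchy), with quadratic
growth away from it. Evaluating the growth bound at points of `A` shows that `(-y, -x)` is
monotonically related to `A`, hence lies in `A`, and then that `x + y = 0`.
-/

open Set Filter Topology
open scoped InnerProductSpace

section StrongConvexFamily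

variable {E ι : Type*} [NormedAddCommGroup E] [NormedSpace ℝ E] {g : ι → E → ℝ} {m μ : ℝ}

lemma le_combo_of_strongConvexOn (hg : ∀ i, StrongConvexOn univ m (g i)) {p q : E}
    {r s a b : ℝ} (hp : ∀ i, g i p ≤ r) (hq : ∀ i, g i q ≤ s) (ha : 0 ≤ a) (hb : 0 ≤ b)
    (hab : a + b = 1) (i : ι) :
    g i (a • p + b • q) ≤ a * r + b * s - a * b * (m / 2 * ‖p - q‖ ^ 2) := by
  have h := (hg i).2 (mem_univ p) (mem_univ q) ha hb hab
  simp only [smul_eq_mul] at h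
  linarith [mul_le_mul_of_nonneg_left (hp i) ha, mul_le_mul_of_nonneg_left (hq i) hb]

section Infimum

variable (hg : ∀ i, StrongConvexOn univ m (g i)) (hμ : ∀ p r, (∀ i, g i p ≤ r) → μ ≤ r)
include hg hμ

lemma norm_sub_sq_le_of_forall_le {p q : E} {ε δ : ℝ} (hp : ∀ i, g i p ≤ μ + ε)
    (hq : ∀ i, g i q ≤ μ + δ) : m / 8 * ‖p - q‖ ^ 2 ≤ (ε + δ) / 2 := by
  have := hμ _ _ (le_combo_of_strongConvexOn hg hp hq (a := 1 / 2) (b := 1 / 2)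
    (by norm_num) (by norm_num) (by norm_num))
  linarith

lemma add_norm_sub_sq_le_of_forall_le {z p : E} {r : ℝ} (hz : ∀ i, g i z ≤ μ)
    (hp : ∀ i, g i p ≤ r) : μ + m / 2 * ‖z - p‖ ^ 2 ≤ r := by
  have hnear : ∀ t ∈ Ioo (0 : ℝ) 1, μ + (1 - t) * (m / 2 * ‖z - p‖ ^ 2) ≤ r := by
    rintro t ⟨ht0, ht1⟩
    have := hμ _ _ (le_combo_of_strongConvexOn hg hz hp (sub_nonneg.2 ht1.le) ht0.le
      (sub_add_cancel 1 t))
    have : t * (μ + (1 - t) * (m / 2 * ‖z - p‖ ^ 2)) ≤ t * r := by linarith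
    exact le_of_mul_le_mul_left this ht0
  have hlim : Tendsto (fun t : ℝ => μ + (1 - t) * (m / 2 * ‖z - p‖ ^ 2)) (𝓝[>] 0)
      (𝓝 (μ + m / 2 * ‖z - p‖ ^ 2)) := by
    refine tendsto_nhdsWithin_of_tendsto_nhds <|
      (by fun_prop : Continuous fun t : ℝ => μ + (1 - t) * (m / 2 * ‖z - p‖ ^ 2)).tendsto' 0 _
        (by simp)
  exact le_of_tendsto hlim (mem_of_superset (Ioo_mem_nhdsGT one_pos) hnear)

lemma exists_forall_le_of_strongConvexOn [CompleteSpace E] (hm : 0 < m)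
    (hlsc : ∀ i, LowerSemicontinuous (g i)) (hinf : ∀ ε > 0, ∃ p, ∀ i, g i p ≤ μ + ε) :
    ∃ z, ∀ i, g i z ≤ μ := by
  choose p hp using fun n : ℕ => hinf (1 / (n + 1)) Nat.one_div_pos_of_nat
  have hdist : ∀ n k N : ℕ, N ≤ n → N ≤ k → dist (p n) (p k) ≤ √(8 / m * (1 / (N + 1))) := by
    intro n k N hn hk
    have h := norm_sub_sq_le_of_forall_le hg hμ (hp n) (hp k)
    have hn' : 1 / ((n : ℝ) + 1) ≤ 1 / (N + 1) := Nat.one_div_le_one_div hn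
    have hk' : 1 / ((k : ℝ) + 1) ≤ 1 / (N + 1) := Nat.one_div_le_one_div hk
    rw [dist_eq_norm]
    refine Real.le_sqrt_of_sq_le ?_
    rw [div_mul_eq_mul_div, le_div_iff₀ hm]
    nlinarith
  have hb : Tendsto (fun N : ℕ => √(8 / m * (1 / (N + 1)))) atTop (𝓝 0) := by
    simpa using (tendsto_one_div_add_atTop_nhds_zero_nat.const_mul (8 / m)).sqrt
  obtain ⟨z, hz⟩ := cauchySeq_tendsto_of_complete (cauchySeq_of_le_tendsto_0 _ hdist hb)
  refine ⟨z, fun i => ?_⟩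
  have hbound : ∀ N : ℕ, g i z ≤ μ + 1 / (N + 1) := fun N =>
    (hlsc i).isClosed_preimage _ |>.mem_of_tendsto hz <| eventually_atTop.2
      ⟨N, fun n hn => (hp n i).trans (by gcongr)⟩
  simpa using ge_of_tendsto' (tendsto_one_div_add_atTop_nhds_zero_nat.const_add μ) hbound

end Infimum

theorem exists_forall_le_and_add_norm_sub_sq_le [CompleteSpace E] (hm : 0 < m)
    (hg : ∀ i, StrongConvexOn univ m (g i)) (hlsc : ∀ i, LowerSemicontinuous (g i))
    (hdom : ∃ p r, ∀ i, g i p ≤ r) (hbdd : ∃ c, ∀ p r, (∀ i, g i p ≤ r) → c ≤ r) :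
    ∃ z μ, (∀ i, g i z ≤ μ) ∧ ∀ p r, (∀ i, g i p ≤ r) → μ + m / 2 * ‖z - p‖ ^ 2 ≤ r := by
  set S : Set ℝ := {r | ∃ p, ∀ i, g i p ≤ r}
  have hS : S.Nonempty := let ⟨p, r, h⟩ := hdom; ⟨r, p, h⟩
  have hSbdd : BddBelow S := let ⟨c, h⟩ := hbdd; ⟨c, fun r ⟨p, hp⟩ => h p r hp⟩
  have hμ : ∀ p r, (∀ i, g i p ≤ r) → sInf S ≤ r := fun p r h => csInf_le hSbdd ⟨p, h⟩
  have hinf : ∀ ε > 0, ∃ p, ∀ i, g i p ≤ sInf S + ε := fun ε hε => by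
    obtain ⟨r, ⟨p, hp⟩, hr⟩ := Real.lt_sInf_add_pos hS hε
    exact ⟨p, fun i => (hp i).trans hr.le⟩
  obtain ⟨z, hz⟩ := exists_forall_le_of_strongConvexOn hg hμ hm hlsc hinf
  exact ⟨z, sInf S, hz, fun p r hp => add_norm_sub_sq_le_of_forall_le hg hμ hz hp⟩

lemma strongConvexOn_half_norm_add_sq_sub {F : Type*} [NormedAddCommGroup F]
    [InnerProductSpace ℝ F] (v : F) (c : ℝ) :
    StrongConvexOn univ 1 fun x : F => ‖x + v‖ ^ 2 / 2 - c := by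
  rw [strongConvexOn_iff_convex]
  have h : (fun x : F => ‖x + v‖ ^ 2 / 2 - c - 1 / 2 * ‖x‖ ^ 2)
      = fun x => innerSL ℝ v x + (‖v‖ ^ 2 / 2 - c) := by
    ext x
    rw [innerSL_apply_apply, norm_add_sq_real, real_inner_comm]
    ring
  rw [h]
  exact ((innerSL ℝ v).toLinearMap.convexOn convex_univ).add_const _

end StrongConvexFamily

lemma eq_and_eq_of_inner_nonneg_of_add_smul_eq {F : Type*} [NormedAddCommGroup F]
    [InnerProductSpace ℝ F] {x w u v : F} {c : ℝ} (hc : 0 < c) (h : 0 ≤ ⟪x - u, w - v⟫_ℝ)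
    (heq : x + c • w = u + c • v) : x = u ∧ w = v := by
  have hxu : x - u = -(c • (w - v)) := by
    rw [smul_sub, neg_sub, sub_eq_sub_iff_add_eq_add, heq, add_comm]
  rw [hxu, inner_neg_left, real_inner_smul_left, real_inner_self_eq_norm_sq] at h
  have hwv : w = v := by
    rw [← sub_eq_zero, ← norm_eq_zero, ← pow_eq_zero_iff two_ne_zero]
    exact le_antisymm (by nlinarith) (sq_nonneg _)
  subst hwv
  exact ⟨add_right_cancel heq, rfl⟩

attribute [local instance] InnerProductSpace.complexToReal

section MonotoneRelations

variable {K : Type*} [NormedAddCommGroup K] [InnerProductSpace ℂ K] {A : Set (K × K)}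

lemma isMonotoneRel_iff : IsMonotoneRel A ↔ ∀ p ∈ A, ∀ q ∈ A, 0 ≤ ⟪p.1 - q.1, p.2 - q.2⟫_ℝ :=
  Iff.rfl

lemma isMaxMonotoneRel_iff : IsMaxMonotoneRel A ↔
    IsMonotoneRel A ∧ ∀ p : K × K, (∀ a ∈ A, 0 ≤ ⟪p.1 - a.1, p.2 - a.2⟫_ℝ) → p ∈ A := by
  refine and_congr_right fun hA => ⟨fun hmax p hp => ?_, fun hmem B hB hAB => ?_⟩
  · have hins : IsMonotoneRel (insert p A) := by
      refine isMonotoneRel_iff.2 ?_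
      rintro q (rfl | hq) r (rfl | hr)
      · simp
      · exact hp r hr
      · rw [← neg_sub r.1, ← neg_sub r.2, inner_neg_neg]
        exact hp q hq
      · exact hA q hq r hr
    rw [hmax _ hins (subset_insert p A)]
    exact mem_insert p A
  · exact hAB.antisymm fun q hq => hmem q fun a ha => hB q hq a (hAB ha)

lemma IsMaxMonotoneRel.nonempty (hA : IsMaxMonotoneRel A) : A.Nonempty := by
  by_contra h
  rw [not_nonempty_iff_eq_empty] at h
  subst h
  simpa using (isMaxMonotoneRel_iff.1 hA).2 0 (by simp)

lemma IsMaxMonotoneRel.preimage_smul_add (hA : IsMaxMonotoneRel A) {c : ℝ} (hc : 0 < c) (w : K) :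
    IsMaxMonotoneRel ((fun p : K × K => (p.1, c • p.2 + w)) ⁻¹' A) := by
  have hscale : ∀ u x y : K, ⟪u, (c • x + w) - (c • y + w)⟫_ℝ = c * ⟪u, x - y⟫_ℝ := by
    intro u x y
    rw [add_sub_add_right_eq_sub, ← smul_sub, real_inner_smul_right]
  rw [isMaxMonotoneRel_iff] at hA ⊢
  refine ⟨isMonotoneRel_iff.2 fun p hp q hq => ?_, fun p hp => hA.2 _ fun a ha => ?_⟩
  · have := isMonotoneRel_iff.1 hA.1 _ hp _ hq
    dsimp only at this
    rwa [hscale, mul_nonneg_iff_of_pos_left hc] at this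
  · have hpre : a.2 = c • (c⁻¹ • (a.2 - w)) + w := by
      rw [smul_smul, mul_inv_cancel₀ hc.ne', one_smul, sub_add_cancel]
    have hmem : (a.1, c⁻¹ • (a.2 - w)) ∈ (fun p : K × K => (p.1, c • p.2 + w)) ⁻¹' A := by
      simpa [← hpre] using ha
    dsimp only
    rw [hpre, hscale]
    exact mul_nonneg hc.le (hp _ hmem)

lemma IsMonotoneRel.norm_sub_le_norm_add_smul_sub (hA : IsMonotoneRel A) {c : ℝ} (hc : 0 ≤ c)
    {a b : K × K} (ha : a ∈ A) (hb : b ∈ A) :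
    ‖a.1 - b.1‖ ≤ ‖(a.1 + c • a.2) - (b.1 + c • b.2)‖ := by
  have hsq : ‖a.1 - b.1‖ ^ 2 ≤ ‖a.1 - b.1‖ * ‖(a.1 + c • a.2) - (b.1 + c • b.2)‖ :=
    calc ‖a.1 - b.1‖ ^ 2 ≤ ‖a.1 - b.1‖ ^ 2 + c * ⟪a.1 - b.1, a.2 - b.2⟫_ℝ :=
          le_add_of_nonneg_right (mul_nonneg hc (hA a ha b hb))
      _ = ⟪a.1 - b.1, (a.1 + c • a.2) - (b.1 + c • b.2)⟫_ℝ := by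
          rw [add_sub_add_comm, ← smul_sub, inner_add_right, real_inner_smul_right,
            real_inner_self_eq_norm_sq]
      _ ≤ _ := real_inner_le_norm _ _
  nlinarith [norm_nonneg (a.1 - b.1), norm_nonneg ((a.1 + c • a.2) - (b.1 + c • b.2))]

theorem isMaxMonotoneRel_of_forall_exists_add_smul_eq (hA : IsMonotoneRel A) {c : ℝ} (hc : 0 < c)
    (hsurj : ∀ z, ∃ a ∈ A, a.1 + c • a.2 = z) : IsMaxMonotoneRel A := by
  refine isMaxMonotoneRel_iff.2 ⟨hA, fun p hp => ?_⟩
  obtain ⟨a, ha, hpa⟩ := hsurj (p.1 + c • p.2)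
  obtain ⟨h1, h2⟩ := eq_and_eq_of_inner_nonneg_of_add_smul_eq hc (hp a ha) hpa.symm
  rwa [Prod.ext h1 h2]

/-- The supremum over `a ∈ A` is the Fitzpatrick function of `A` plus `‖p‖² / 2`. -/
def fitzpatrickTerm (a : K × K) (p : WithLp 2 (K × K)) : ℝ :=
  ‖p + WithLp.toLp 2 (a.2, a.1)‖ ^ 2 / 2 - ‖a.1 + a.2‖ ^ 2 / 2

lemma fitzpatrickTerm_eq (a : K × K) (p : WithLp 2 (K × K)) :
    fitzpatrickTerm a p = ‖p.fst + p.snd‖ ^ 2 / 2 - ⟪p.fst - a.1, p.snd - a.2⟫_ℝ := by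
  rw [fitzpatrickTerm, WithLp.prod_norm_sq_eq_of_L2]
  simp only [WithLp.add_fst, WithLp.add_snd, WithLp.toLp_fst, WithLp.toLp_snd]
  rw [norm_add_sq_real, norm_add_sq_real, norm_add_sq_real, norm_add_sq_real, inner_sub_left,
    inner_sub_right, inner_sub_right, real_inner_comm a.1 p.snd]
  ring

lemma IsMonotoneRel.fitzpatrickTerm_le (hA : IsMonotoneRel A) {a b : K × K} (ha : a ∈ A)
    (hb : b ∈ A) : fitzpatrickTerm a (WithLp.toLp 2 b) ≤ ‖b.1 + b.2‖ ^ 2 / 2 := by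
  have := isMonotoneRel_iff.1 hA b hb a ha
  rw [fitzpatrickTerm_eq, WithLp.toLp_fst, WithLp.toLp_snd]
  linarith

lemma IsMaxMonotoneRel.nonneg_of_forall_fitzpatrickTerm_le (hA : IsMaxMonotoneRel A)
    {p : WithLp 2 (K × K)} {r : ℝ} (h : ∀ a ∈ A, fitzpatrickTerm a p ≤ r) : 0 ≤ r := by
  by_contra! hr
  have hmem : (p.fst, p.snd) ∈ A := by
    refine (isMaxMonotoneRel_iff.1 hA).2 _ fun a ha => ?_
    have := h a ha
    rw [fitzpatrickTerm_eq] at this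
    nlinarith [sq_nonneg ‖p.fst + p.snd‖]
  have := h _ hmem
  rw [fitzpatrickTerm_eq] at this
  simp only [sub_self, inner_zero_left] at this
  nlinarith [sq_nonneg ‖p.fst + p.snd‖]

theorem IsMaxMonotoneRel.exists_add_eq_zero [CompleteSpace K] (hA : IsMaxMonotoneRel A) :
    ∃ a ∈ A, a.1 + a.2 = 0 := by
  obtain ⟨a₀, ha₀⟩ := hA.nonempty
  obtain ⟨z, μ, hz, hgrowth⟩ := exists_forall_le_and_add_norm_sub_sq_le
    (g := fun a : A => fitzpatrickTerm a.1) one_pos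
    (fun a => strongConvexOn_half_norm_add_sq_sub _ _)
    (fun a => (by unfold fitzpatrickTerm; fun_prop : Continuous _).lowerSemicontinuous)
    ⟨WithLp.toLp 2 a₀, _, fun a => hA.1.fitzpatrickTerm_le a.2 ha₀⟩
    ⟨0, fun p r hp => hA.nonneg_of_forall_fitzpatrickTerm_le fun a ha => hp ⟨a, ha⟩⟩
  set x := z.fst
  set y := z.snd
  have hμ : 0 ≤ μ := hA.nonneg_of_forall_fitzpatrickTerm_le fun a ha => hz ⟨a, ha⟩
  have key : ∀ b ∈ A, μ + ‖x + y‖ ^ 2 / 2 ≤ ⟪y + b.1, x + b.2⟫_ℝ := by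
    intro b hb
    have h := hgrowth (WithLp.toLp 2 b) _ fun a => hA.1.fitzpatrickTerm_le a.2 hb
    rw [WithLp.prod_norm_sq_eq_of_L2] at h
    simp only [WithLp.sub_fst, WithLp.sub_snd, WithLp.toLp_fst, WithLp.toLp_snd] at h
    rw [norm_sub_sq_real, norm_sub_sq_real, norm_add_sq_real] at h
    rw [norm_add_sq_real, inner_add_left, inner_add_right, inner_add_right,
      real_inner_comm x y, real_inner_comm x b.1]
    linarith
  have hmem : (-y, -x) ∈ A := (isMaxMonotoneRel_iff.1 hA).2 _ fun b hb => by
    rw [← neg_add', ← neg_add', inner_neg_neg]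
    nlinarith [key b hb, sq_nonneg ‖x + y‖]
  have h := key _ hmem
  simp only [add_neg_cancel, inner_zero_left] at h
  refine ⟨_, hmem, ?_⟩
  rw [← neg_add, neg_eq_zero, ← norm_eq_zero, ← pow_eq_zero_iff two_ne_zero, add_comm]
  exact le_antisymm (by linarith) (sq_nonneg _)

theorem IsMaxMonotoneRel.exists_add_smul_eq [CompleteSpace K] (hA : IsMaxMonotoneRel A) {c : ℝ}
    (hc : 0 < c) (z : K) : ∃ a ∈ A, a.1 + c • a.2 = z := by
  obtain ⟨p, hp, hsum⟩ := (hA.preimage_smul_add (inv_pos.2 hc) (c⁻¹ • z)).exists_add_eq_zero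
  refine ⟨_, hp, ?_⟩
  dsimp only
  rw [smul_add, smul_smul, smul_smul, mul_inv_cancel₀ hc.ne', one_smul, one_smul, ← add_assoc,
    hsum, zero_add]

theorem IsMaxMonotoneRel.exists_resolvent [CompleteSpace K] (hA : IsMaxMonotoneRel A) {c : ℝ}
    (hc : 0 < c) : ∃ J : K → K, LipschitzWith 1 J ∧ ∀ z, ∃ v, (J z, v) ∈ A ∧ J z + c • v = z := by
  choose a ha hz using hA.exists_add_smul_eq hc
  refine ⟨fun z => (a z).1, LipschitzWith.mk_one fun x y => ?_,
    fun z => ⟨(a z).2, ha z, hz z⟩⟩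
  simpa [dist_eq_norm, hz] using hA.1.norm_sub_le_norm_add_smul_sub hc.le (ha x) (ha y)

theorem IsMaxMonotoneRel.exists_add_smul_add_eq [CompleteSpace K] (hA : IsMaxMonotoneRel A)
    {B : K → K} {L : NNReal} (hB : LipschitzWith L B) {c : ℝ} (hc : 0 < c) (hcL : c * L < 1)
    (z : K) : ∃ a ∈ A, a.1 + c • (a.2 + B a.1) = z := by
  obtain ⟨J, hJ, hJA⟩ := hA.exists_resolvent hc
  have hcontr : ContractingWith (Real.toNNReal c * L) fun y => J (z - c • B y) := by
    refine ⟨by rwa [← NNReal.coe_lt_coe, NNReal.coe_mul, Real.coe_toNNReal _ hc.le], ?_⟩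
    refine LipschitzWith.of_dist_le_mul fun y y' => ?_
    calc dist (J (z - c • B y)) (J (z - c • B y')) ≤ dist (c • B y) (c • B y') := by
          have := hJ.dist_le_mul (z - c • B y) (z - c • B y')
          rwa [NNReal.coe_one, one_mul, dist_sub_left] at this
      _ ≤ c * (L * dist y y') := by
          rw [dist_smul₀, Real.norm_of_nonneg hc.le]
          exact mul_le_mul_of_nonneg_left (hB.dist_le_mul y y') hc.le
      _ = _ := by rw [NNReal.coe_mul, Real.coe_toNNReal _ hc.le, mul_assoc]
  obtain ⟨y, hy⟩ : ∃ y, J (z - c • B y) = y := ⟨_, hcontr.fixedPoint_isFixedPt⟩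
  obtain ⟨v, hv, hJv⟩ := hJA (z - c • B y)
  rw [hy] at hv hJv
  exact ⟨(y, v), hv, by rw [smul_add, ← add_assoc, hJv, sub_add_cancel]⟩

end MonotoneRelations

/-- If `A ⊆ H × H` is maximal monotone, `B : H → H` is Lipschitz continuous
and the relation `A + B = {(x, y + Bx) ; (x,y) ∈ A}` is monotone, then `A + B` is
maximal monotone. -/
theorem maxMonotone_add_lipschitz
    {K : Type*} [NormedAddCommGroup K] [InnerProductSpace ℂ K] [CompleteSpace K]
    (A : Set (K × K)) (B : K → K)
    (hA : IsMaxMonotoneRel A)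
    (hB : ∃ L : NNReal, LipschitzWith L B)
    (hmono : IsMonotoneRel ((fun p : K × K => (p.1, p.2 + B p.1)) '' A)) :
    IsMaxMonotoneRel ((fun p : K × K => (p.1, p.2 + B p.1)) '' A) := by
  obtain ⟨L, hL⟩ := hB
  have hc : (0 : ℝ) < ((L : ℝ) + 1)⁻¹ := by positivity
  have hcL : ((L : ℝ) + 1)⁻¹ * L < 1 := by
    rw [inv_mul_lt_iff₀ (by positivity)]
    linarith
  refine isMaxMonotoneRel_of_forall_exists_add_smul_eq hmono hc fun z => ?_
  obtain ⟨a, ha, hz⟩ := hA.exists_add_smul_add_eq hL hc hcL z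
  exact ⟨_, ⟨a, ha, rfl⟩, hz⟩
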